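/- arXiv:1801.06329 — 3 statements merged into one kernel-verified Lean document; each statement's English description precedes it below -/
import Mathlib

section
/- Let τ > 1 and Λ > 1. There exists C = C(Λ, τ) > 0 such that for all c with 1 < c < Λ, one has (x + 1)^τ ≤ c·x^τ + C/(c-1)^(τ-1) for all x ≥ 1. -/
/-!
Write `x + 1 = t • (x / t) + (1 - t) • (1 / (1 - t))` with `t = 1 / d` and `d ^ (τ - 1) = c`;
convexity of `u ↦ u ^ τ` gives `(x + 1) ^ τ ≤ c * x ^ τ + (1 - 1 / d) ^ (1 - τ)`.
Since `d - 1 ≥ (1 - 1 / c) / (τ - 1)` (from `log c ≥ 1 - 1 / c` and `exp y ≥ 1 + y`), the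
remainder is at most `(τ - 1) ^ (τ - 1) * c ^ τ / (c - 1) ^ (τ - 1)`, so
`C = (τ - 1) ^ (τ - 1) * Λ ^ τ` works.
-/

open Real

theorem add_rpow_le_div_rpow_add_div_rpow {p t a b : ℝ} (hp : 1 ≤ p) (ht₀ : 0 < t) (ht₁ : t < 1)
    (ha : 0 ≤ a) (hb : 0 ≤ b) :
    (a + b) ^ p ≤ a ^ p / t ^ (p - 1) + b ^ p / (1 - t) ^ (p - 1) := by
  have hs₀ : 0 < 1 - t := by linarith
  have h := (convexOn_rpow hp).2 (Set.mem_Ici.2 (div_nonneg ha ht₀.le))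
    (Set.mem_Ici.2 (div_nonneg hb hs₀.le)) ht₀.le hs₀.le (add_sub_cancel t 1)
  have hsum : t • (a / t) + (1 - t) • (b / (1 - t)) = a + b := by
    simp only [smul_eq_mul]; field_simp
  have hweight : ∀ {u w : ℝ}, 0 < u → 0 ≤ w → u * (w / u) ^ p = w ^ p / u ^ (p - 1) := by
    intro u w hu hw
    rw [div_rpow hw hu.le, rpow_sub_one hu.ne']
    field_simp
  rw [hsum] at h
  simpa only [smul_eq_mul, hweight ht₀ ha, hweight hs₀ hb] using h

theorem mul_one_sub_inv_le_rpow_sub_one {c s : ℝ} (hc : 0 < c) (hs : 0 ≤ s) :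
    s * (1 - c⁻¹) ≤ c ^ s - 1 := by
  calc s * (1 - c⁻¹) ≤ s * log c := mul_le_mul_of_nonneg_left (one_sub_inv_le_log_of_pos hc) hs
    _ ≤ exp (log c * s) - 1 := by linarith [add_one_le_exp (log c * s)]
    _ = c ^ s - 1 := by rw [rpow_def_of_pos hc]

theorem rpow_add_one_le_mul_rpow_add {τ c x : ℝ} (hτ : 1 < τ) (hc : 1 < c) (hx : 0 ≤ x) :
    (x + 1) ^ τ ≤ c * x ^ τ + (τ - 1) ^ (τ - 1) * c ^ τ / (c - 1) ^ (τ - 1) := by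
  have hτ₁ : 0 < τ - 1 := by linarith
  have hc₀ : 0 < c := by linarith
  have hc₁ : 0 < c - 1 := by linarith
  set d := c ^ (τ - 1)⁻¹
  have hdc : d ^ (τ - 1) = c := rpow_inv_rpow hc₀.le hτ₁.ne'
  have hd₀ : 0 < d := by positivity
  have hd₁ : 1 < d := one_lt_rpow hc (inv_pos.2 hτ₁)
  have hgap : (c - 1) / ((τ - 1) * c * d) ≤ 1 - d⁻¹ :=
    calc (c - 1) / ((τ - 1) * c * d) = (τ - 1)⁻¹ * (1 - c⁻¹) / d := by field_simp
      _ ≤ (d - 1) / d := by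
          gcongr
          exact mul_one_sub_inv_le_rpow_sub_one hc₀ (inv_pos.2 hτ₁).le
      _ = 1 - d⁻¹ := by field_simp
  have hfirst : x ^ τ / d⁻¹ ^ (τ - 1) = c * x ^ τ := by
    rw [inv_rpow hd₀.le, hdc]; field_simp
  have hsecond : (1 : ℝ) ^ τ / (1 - d⁻¹) ^ (τ - 1) ≤
      (τ - 1) ^ (τ - 1) * c ^ τ / (c - 1) ^ (τ - 1) :=
    calc (1 : ℝ) ^ τ / (1 - d⁻¹) ^ (τ - 1)
        ≤ 1 / ((c - 1) / ((τ - 1) * c * d)) ^ (τ - 1) := by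
          rw [one_rpow]
          exact one_div_le_one_div_of_le (by positivity) (rpow_le_rpow (by positivity) hgap hτ₁.le)
      _ = (τ - 1) ^ (τ - 1) * c ^ τ / (c - 1) ^ (τ - 1) := by
          rw [div_rpow hc₁.le (by positivity), mul_rpow (by positivity) hd₀.le,
            mul_rpow hτ₁.le hc₀.le, hdc, rpow_sub_one hc₀.ne' τ]
          field_simp
  have hmain := add_rpow_le_div_rpow_add_div_rpow hτ.le (inv_pos.2 hd₀)
    (inv_lt_one_of_one_lt₀ hd₁) hx zero_le_one
  linarith

theorem stmt_1 (Λ τ : ℝ) (hΛ : 1 < Λ) (hτ : 1 < τ) :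
    ∃ C : ℝ, 0 < C ∧ ∀ c : ℝ, 1 < c → c < Λ → ∀ x : ℝ, 1 ≤ x →
      (x + 1) ^ τ ≤ c * x ^ τ + C / (c - 1) ^ (τ - 1) := by
  refine ⟨(τ - 1) ^ (τ - 1) * Λ ^ τ, by positivity, fun c hc hcΛ x hx => ?_⟩
  calc (x + 1) ^ τ ≤ c * x ^ τ + (τ - 1) ^ (τ - 1) * c ^ τ / (c - 1) ^ (τ - 1) :=
        rpow_add_one_le_mul_rpow_add hτ hc (by linarith)
    _ ≤ c * x ^ τ + (τ - 1) ^ (τ - 1) * Λ ^ τ / (c - 1) ^ (τ - 1) := by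
        gcongr
end

section
/- Let d ≥ 1 be an integer and 1 ≤ p < d. There exists a constant C = C(d,p) > 0 such that for every continuously differentiable function u with compact support in ℝ^d, one has ∫_{ℝ^d} |u(x)|^p / |x|^p dx ≤ C ∫_{ℝ^d} |∇u(x)|^p dx. -/
/-!
Writing `u x = -∫₁^∞ (d/ds) u (s • x) ds` gives `‖u x‖ / ‖x‖ ≤ ∫₁^∞ ‖Du (s • x)‖ ds`.
Hölder's inequality against the weight `s ^ (-d/p)`, which is integrable on `(1, ∞)` exactly
because `p < d`, followed by Tonelli and the scaling `∫ G (s • x) dx = s ^ (-d) ∫ G`, bounds the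
`L^p` norm of the right-hand side by `p / (d - p)` times that of `Du`.
-/

open MeasureTheory Real Set Filter Module
open scoped ENNReal

theorem rpow_lintegral_le_weighted_lintegral {α : Type*} [MeasurableSpace α]
    {ν : Measure α} {f w : α → ℝ≥0∞} (hf : AEMeasurable f ν) (hw : AEMeasurable w ν)
    (hw_ne_zero : ∀ᵐ a ∂ν, w a ≠ 0) (hw_ne_top : ∀ᵐ a ∂ν, w a ≠ ∞) {p : ℝ} (hp : 1 ≤ p) :
    (∫⁻ a, f a ∂ν) ^ p ≤ (∫⁻ a, w a ∂ν) ^ (p - 1) * ∫⁻ a, w a ^ (1 - p) * f a ^ p ∂ν := by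
  have hp0 : 0 < p := zero_lt_one.trans_le hp
  have hsplit : ∀ᵐ a ∂ν, f a = w a ^ (1 - p⁻¹) * (w a ^ (1 - p) * f a ^ p) ^ p⁻¹ := by
    filter_upwards [hw_ne_zero, hw_ne_top] with a h0 htop
    rw [ENNReal.mul_rpow_of_nonneg _ _ (inv_nonneg.2 hp0.le), ← ENNReal.rpow_mul,
      ENNReal.rpow_rpow_inv hp0.ne', ← mul_assoc, ← ENNReal.rpow_add _ _ h0 htop]
    field_simp
    simp
  have hholder := ENNReal.lintegral_mul_norm_pow_le hw
    ((hw.pow_const (1 - p)).mul (hf.pow_const p)) (sub_nonneg.2 (inv_le_one_of_one_le₀ hp))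
    (inv_nonneg.2 hp0.le) (sub_add_cancel 1 p⁻¹)
  calc (∫⁻ a, f a ∂ν) ^ p
      ≤ ((∫⁻ a, w a ∂ν) ^ (1 - p⁻¹) * (∫⁻ a, w a ^ (1 - p) * f a ^ p ∂ν) ^ p⁻¹) ^ p := by
        rw [lintegral_congr_ae hsplit]
        exact ENNReal.rpow_le_rpow hholder hp0.le
    _ = _ := by
        rw [ENNReal.mul_rpow_of_nonneg _ _ hp0.le, ← ENNReal.rpow_mul, ← ENNReal.rpow_mul,
          inv_mul_cancel₀ hp0.ne', ENNReal.rpow_one]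
        congr 2
        field_simp

theorem lintegral_Ioi_one_ofReal_rpow {a : ℝ} (ha : a < -1) :
    ∫⁻ s in Ioi (1 : ℝ), ENNReal.ofReal (s ^ a) = ENNReal.ofReal (-1 / (a + 1)) := by
  rw [← ofReal_integral_eq_lintegral_ofReal (integrableOn_Ioi_rpow_of_lt ha zero_lt_one)
    (ae_restrict_of_forall_mem measurableSet_Ioi fun s hs =>
      rpow_nonneg (zero_le_one.trans hs.le) a),
    integral_Ioi_rpow_of_lt ha zero_lt_one, one_rpow]

theorem rpow_lintegral_Ioi_one_le {g : ℝ → ℝ≥0∞} (hg : AEMeasurable g (volume.restrict (Ioi 1)))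
    {p : ℝ} (hp : 1 ≤ p) (a : ℝ) :
    (∫⁻ s in Ioi (1 : ℝ), g s) ^ p ≤ (∫⁻ s in Ioi (1 : ℝ), ENNReal.ofReal (s ^ (-a))) ^ (p - 1) *
      ∫⁻ s in Ioi (1 : ℝ), ENNReal.ofReal (s ^ (a * (p - 1))) * g s ^ p := by
  refine (rpow_lintegral_le_weighted_lintegral (w := fun s => ENNReal.ofReal (s ^ (-a))) hg
    (by fun_prop) ?_ (ae_of_all _ fun _ => ENNReal.ofReal_ne_top) hp).trans_eq ?_
  · filter_upwards [ae_restrict_mem measurableSet_Ioi] with s hs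
    exact (ENNReal.ofReal_pos.2 (rpow_pos_of_pos (zero_lt_one.trans hs) _)).ne'
  · congr 1
    refine setLIntegral_congr_fun measurableSet_Ioi fun s hs => ?_
    have hs0 : 0 < s := zero_lt_one.trans hs
    rw [ENNReal.ofReal_rpow_of_pos (rpow_pos_of_pos hs0 _), ← rpow_mul hs0.le, neg_mul_comm,
      neg_sub]

section Hardy

variable {E F : Type*} [NormedAddCommGroup E] [NormedSpace ℝ E]
  [NormedAddCommGroup F] [NormedSpace ℝ F] [CompleteSpace F]

theorem enorm_le_enorm_mul_lintegral_fderiv_smul {u : E → F} (hu : ContDiff ℝ 1 u)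
    (hsupp : HasCompactSupport u) {x : E} (hx : x ≠ 0) :
    ‖u x‖ₑ ≤ ‖x‖ₑ * ∫⁻ s in Ioi (1 : ℝ), ‖fderiv ℝ u (s • x)‖ₑ := by
  set g : ℝ → F := fun s => u (s • x)
  have hg : ContDiff ℝ 1 g := hu.comp (contDiff_id.smul contDiff_const)
  have hg_supp : HasCompactSupport g :=
    hsupp.comp_isClosedEmbedding (isClosedEmbedding_smul_left hx)
  have hderiv (s : ℝ) : deriv g s = fderiv ℝ u (s • x) x := by
    have := ((hu.differentiable one_ne_zero (s • x)).hasFDerivAt).comp_hasDerivAt s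
      ((hasDerivAt_id s).smul_const x)
    simpa [g, Function.comp_def] using this.deriv
  calc ‖u x‖ₑ = ‖∫ s in Ioi (1 : ℝ), deriv g s‖ₑ := by
        rw [hg_supp.integral_Ioi_deriv_eq hg 1, enorm_neg]
        simp [g]
    _ ≤ ∫⁻ s in Ioi (1 : ℝ), ‖deriv g s‖ₑ := enorm_integral_le_lintegral_enorm _
    _ ≤ ∫⁻ s in Ioi (1 : ℝ), ‖fderiv ℝ u (s • x)‖ₑ * ‖x‖ₑ :=
        lintegral_mono fun s => hderiv s ▸ ContinuousLinearMap.le_opENorm _ _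
    _ = _ := by rw [lintegral_mul_const' _ _ enorm_ne_top, mul_comm]

variable [FiniteDimensional ℝ E] [MeasurableSpace E] [BorelSpace E]
  (μ : Measure E) [μ.IsAddHaarMeasure]

theorem lintegral_comp_smul_of_pos (f : E → ℝ≥0∞) {r : ℝ} (hr : 0 < r) :
    ∫⁻ x, f (r • x) ∂μ = ENNReal.ofReal (r ^ (-(finrank ℝ E : ℝ))) * ∫⁻ x, f x ∂μ := by
  rw [← (measurableEmbedding_const_smul₀ hr.ne').lintegral_map,
    Measure.map_addHaar_smul μ hr.ne', lintegral_smul_measure, smul_eq_mul,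
    abs_of_pos (by positivity), rpow_neg hr.le, rpow_natCast]

theorem lintegral_lintegral_Ioi_rpow_mul_comp_smul {G : E → ℝ≥0∞} (hG : Measurable G) (c : ℝ) :
    ∫⁻ x, (∫⁻ s in Ioi (1 : ℝ), ENNReal.ofReal (s ^ c) * G (s • x)) ∂μ
      = (∫⁻ s in Ioi (1 : ℝ), ENNReal.ofReal (s ^ (c - finrank ℝ E))) * ∫⁻ x, G x ∂μ := by
  rw [lintegral_lintegral_swap (by fun_prop), ← lintegral_mul_const _ (by fun_prop)]
  refine setLIntegral_congr_fun measurableSet_Ioi fun s hs => ?_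
  have hs0 : 0 < s := zero_lt_one.trans hs
  rw [lintegral_const_mul _ (by fun_prop), lintegral_comp_smul_of_pos μ G hs0, ← mul_assoc,
    ← ENNReal.ofReal_mul (by positivity), ← rpow_add hs0, sub_eq_add_neg]

theorem lintegral_enorm_div_enorm_rpow_le {p : ℝ} (hp : 1 ≤ p) (hpd : p < finrank ℝ E)
    {u : E → F} (hu : ContDiff ℝ 1 u) (hsupp : HasCompactSupport u) :
    ∫⁻ x, (‖u x‖ₑ / ‖x‖ₑ) ^ p ∂μ
      ≤ ENNReal.ofReal ((p / (finrank ℝ E - p)) ^ p) * ∫⁻ x, ‖fderiv ℝ u x‖ₑ ^ p ∂μ := by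
  have hp0 : 0 < p := zero_lt_one.trans_le hp
  have : Nontrivial E :=
    Module.nontrivial_of_finrank_pos (R := ℝ) (by exact_mod_cast hp0.trans hpd)
  set d : ℝ := (finrank ℝ E : ℝ)
  have hA : ∫⁻ s in Ioi (1 : ℝ), ENNReal.ofReal (s ^ (-(d / p)))
      = ENNReal.ofReal (p / (d - p)) := by
    rw [lintegral_Ioi_one_ofReal_rpow]
    · rw [show -(d / p) + 1 = -((d - p) / p) by field_simp; ring, div_neg, neg_div, neg_neg,
        one_div_div]
    · rw [neg_lt_neg_iff, one_lt_div hp0]; exact hpd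
  have hray : ∀ᵐ x ∂μ,
      (‖u x‖ₑ / ‖x‖ₑ) ^ p ≤ (∫⁻ s in Ioi (1 : ℝ), ‖fderiv ℝ u (s • x)‖ₑ) ^ p := by
    filter_upwards [μ.ae_ne 0] with x hx
    gcongr
    rw [ENNReal.div_le_iff (enorm_ne_zero.2 hx) enorm_ne_top, mul_comm]
    exact enorm_le_enorm_mul_lintegral_fderiv_smul hu hsupp hx
  calc ∫⁻ x, (‖u x‖ₑ / ‖x‖ₑ) ^ p ∂μ
      ≤ ∫⁻ x, (∫⁻ s in Ioi (1 : ℝ), ‖fderiv ℝ u (s • x)‖ₑ) ^ p ∂μ := lintegral_mono_ae hray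
    _ ≤ ∫⁻ x, (ENNReal.ofReal (p / (d - p)) ^ (p - 1) * ∫⁻ s in Ioi (1 : ℝ),
          ENNReal.ofReal (s ^ (d / p * (p - 1))) * ‖fderiv ℝ u (s • x)‖ₑ ^ p) ∂μ :=
        lintegral_mono fun x => hA ▸ rpow_lintegral_Ioi_one_le (by fun_prop) hp (d / p)
    _ = ENNReal.ofReal (p / (d - p)) ^ (p - 1) *
          (ENNReal.ofReal (p / (d - p)) * ∫⁻ x, ‖fderiv ℝ u x‖ₑ ^ p ∂μ) := by
        rw [lintegral_const_mul' _ _ (ENNReal.rpow_ne_top_of_nonneg (sub_nonneg.2 hp)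
          ENNReal.ofReal_ne_top), lintegral_lintegral_Ioi_rpow_mul_comp_smul μ
          (G := fun y => ‖fderiv ℝ u y‖ₑ ^ p) (by fun_prop), ← hA]
        congr 4 with s
        congr 2
        field_simp
        ring
    _ = _ := by
        have hC : 0 < p / (d - p) := div_pos hp0 (sub_pos.2 hpd)
        rw [← mul_assoc, ENNReal.ofReal_rpow_of_nonneg hC.le (sub_nonneg.2 hp),
          ← ENNReal.ofReal_mul (by positivity), ← rpow_add_one hC.ne', sub_add_cancel]

theorem integral_norm_rpow_div_norm_rpow_le {p : ℝ} (hp : 1 ≤ p) (hpd : p < finrank ℝ E)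
    {u : E → F} (hu : ContDiff ℝ 1 u) (hsupp : HasCompactSupport u) :
    ∫ x, ‖u x‖ ^ p / ‖x‖ ^ p ∂μ ≤ (p / (finrank ℝ E - p)) ^ p * ∫ x, ‖fderiv ℝ u x‖ ^ p ∂μ := by
  have hp0 : 0 < p := zero_lt_one.trans_le hp
  have hC : 0 ≤ (p / (finrank ℝ E - p)) ^ p := by have := sub_pos.2 hpd; positivity
  have hDu_int : Integrable (fun x => ‖fderiv ℝ u x‖ ^ p) μ :=
    ((hu.continuous_fderiv one_ne_zero).norm.rpow_const fun _ => Or.inr hp0.le)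
      |>.integrable_of_hasCompactSupport
        ((hsupp.fderiv ℝ).comp_left (g := fun L => ‖L‖ ^ p) (by simp [zero_rpow hp0.ne']))
  have hlhs : ∫⁻ x, ENNReal.ofReal (‖u x‖ ^ p / ‖x‖ ^ p) ∂μ
      ≤ ∫⁻ x, (‖u x‖ₑ / ‖x‖ₑ) ^ p ∂μ := by
    refine lintegral_mono fun x => ?_
    rcases eq_or_ne x 0 with rfl | hx
    · rw [norm_zero, zero_rpow hp0.ne', div_zero, ENNReal.ofReal_zero]
      exact zero_le
    · rw [← div_rpow (norm_nonneg _) (norm_nonneg _),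
        ← ENNReal.ofReal_rpow_of_nonneg (by positivity) hp0.le,
        ENNReal.ofReal_div_of_pos (norm_pos_iff.2 hx), ofReal_norm, ofReal_norm]
  have hrhs : ∫⁻ x, ‖fderiv ℝ u x‖ₑ ^ p ∂μ
      = ENNReal.ofReal (∫ x, ‖fderiv ℝ u x‖ ^ p ∂μ) := by
    rw [ofReal_integral_eq_lintegral_ofReal hDu_int (ae_of_all _ fun _ => by positivity)]
    congr 1 with x
    rw [← ofReal_norm, ENNReal.ofReal_rpow_of_nonneg (norm_nonneg _) hp0.le]
  have hbound := (hlhs.trans (lintegral_enorm_div_enorm_rpow_le μ hp hpd hu hsupp)).trans_eq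
    (by rw [hrhs, ← ENNReal.ofReal_mul hC])
  have hmeas : Measurable fun x => ‖u x‖ ^ p / ‖x‖ ^ p :=
    (hu.continuous.norm.measurable.pow_const p).div (measurable_norm.pow_const p)
  rw [integral_eq_lintegral_of_nonneg_ae (ae_of_all _ fun _ => by positivity)
    hmeas.aestronglyMeasurable]
  exact ENNReal.toReal_le_of_le_ofReal (mul_nonneg hC (integral_nonneg fun _ => by positivity))
    hbound

end Hardy

theorem stmt_6_general (d : ℕ) (p : ℝ) (hp : 1 ≤ p) (hpd : p < d) :
    ∃ C : ℝ, 0 < C ∧ ∀ u : EuclideanSpace ℝ (Fin d) → ℝ,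
      ContDiff ℝ 1 u → HasCompactSupport u →
      ∫ x, |u x| ^ p / ‖x‖ ^ p ≤ C * ∫ x, ‖fderiv ℝ u x‖ ^ p := by
  have hdp : 0 < d - p := sub_pos.2 hpd
  refine ⟨(p / (d - p)) ^ p, by positivity, fun u hu hsupp => ?_⟩
  simpa only [Real.norm_eq_abs, finrank_euclideanSpace_fin] using
    integral_norm_rpow_div_norm_rpow_le volume hp (by rwa [finrank_euclideanSpace_fin]) hu hsupp

theorem stmt_6 (d : ℕ) (hd : 1 ≤ d) (p : ℝ) (hp : 1 ≤ p) (hpd : p < d) :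
    ∃ C : ℝ, 0 < C ∧ ∀ u : EuclideanSpace ℝ (Fin d) → ℝ,
      ContDiff ℝ 1 u → HasCompactSupport u →
      ∫ x, |u x| ^ p / ‖x‖ ^ p ≤ C * ∫ x, ‖fderiv ℝ u x‖ ^ p :=
  stmt_6_general d p hp hpd
end

section
/- Let p > 1 and α ∈ ℝ with -1/p < α < 1 - 1/p. There exists a constant C > 0 depending only on p and α such that for every bounded interval (a, b) ⊂ ℝ and every x' ≥ 0 (representing |x'| for x' ∈ ℝ^{d-1}), one has ( (1/(b-a)) ∫_a^b (x' + |s|)^{pα} ds ) · ( (1/(b-a)) ∫_a^b (x' + |s|)^{-pα/(p-1)} ds )^{p-1} ≤ C. -/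
/-!
Let `D` be the distance from `0` to `[a, b]`, `L = b - a` and `R = max (x' + D) L`. For every
`γ > -1` the average of `(x' + |s|) ^ γ` over `(a, b)` is at most `K γ * R ^ γ`. For `γ ≥ 0` this
holds because `x' + |s| ≤ x' + D + L ≤ 2 R` on the interval. For `γ ≤ 0` there are two cases.
If `L ≤ x' + D`, the weight is at most `(x' + D) ^ γ`. Otherwise `[a, b] ⊆ [-2L, 2L]` and the
weight is at most `|s| ^ γ`, whose integral over that interval is `2 (2L) ^ (γ + 1) / (γ + 1)`.
The exponents `pα` and `-pα / (p - 1)` both exceed `-1`, and the product of the two bounds is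
`R ^ 0 = 1`.
-/

open Real intervalIntegral MeasureTheory Set Metric

lemma intervalIntegrable_abs_rpow {γ : ℝ} (hγ : -1 < γ) (a b : ℝ) :
    IntervalIntegrable (fun s : ℝ => |s| ^ γ) volume a b := by
  have hneg : IntervalIntegrable (fun s : ℝ => (-s) ^ γ) volume a b := by
    simpa using (IntervalIntegrable.iff_comp_neg (f := fun s : ℝ => s ^ γ)).mp
      (intervalIntegrable_rpow' hγ (a := -a) (b := -b))
  refine ((intervalIntegrable_rpow' hγ).norm.add hneg.norm).mono_fun'
    (measurable_abs.pow_const γ).aestronglyMeasurable (ae_of_all _ fun s => ?_)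
  rcases le_total 0 s with hs | hs
  · simp [abs_of_nonneg hs, abs_of_nonneg (rpow_nonneg hs γ)]
  · simp [abs_of_nonpos hs, abs_of_nonneg (rpow_nonneg (neg_nonneg.2 hs) γ)]

lemma integral_abs_rpow_neg_self {γ r : ℝ} (hγ : -1 < γ) (hr : 0 ≤ r) :
    ∫ s in -r..r, |s| ^ γ = 2 * (r ^ (γ + 1) / (γ + 1)) := by
  have hpos : ∫ s in (0 : ℝ)..r, |s| ^ γ = r ^ (γ + 1) / (γ + 1) := by
    rw [integral_congr (g := fun s => s ^ γ) fun s hs => ?_, integral_rpow (Or.inl hγ),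
      zero_rpow (by linarith), sub_zero]
    rw [uIcc_of_le hr] at hs
    simp [abs_of_nonneg hs.1]
  have hneg : ∫ s in -r..0, |s| ^ γ = ∫ s in (0 : ℝ)..r, |s| ^ γ := by
    simpa using (integral_comp_neg (fun s : ℝ => |s| ^ γ) (a := 0) (b := r)).symm
  rw [← integral_add_adjacent_intervals (intervalIntegrable_abs_rpow hγ _ _)
    (intervalIntegrable_abs_rpow hγ _ _), hneg, hpos]
  ring

lemma integral_abs_rpow_le {γ a b r : ℝ} (hγ : -1 < γ) (hab : a ≤ b) (ha : -r ≤ a)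
    (hb : b ≤ r) : ∫ s in a..b, |s| ^ γ ≤ 2 * (r ^ (γ + 1) / (γ + 1)) := by
  rw [← integral_abs_rpow_neg_self hγ (by linarith)]
  exact integral_mono_interval ha hab hb (ae_of_all _ fun s => rpow_nonneg (abs_nonneg s) γ)
    (intervalIntegrable_abs_rpow hγ _ _)

lemma add_abs_rpow_le_abs_rpow {γ x' s : ℝ} (hγ : γ ≤ 0) (hx' : 0 ≤ x') (hs : s ≠ 0) :
    (x' + |s|) ^ γ ≤ |s| ^ γ :=
  rpow_le_rpow_of_nonpos (abs_pos.2 hs) (le_add_of_nonneg_left hx') hγ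

lemma intervalIntegrable_add_abs_rpow {γ x' : ℝ} (hγ : -1 < γ) (hx' : 0 ≤ x') (a b : ℝ) :
    IntervalIntegrable (fun s : ℝ => (x' + |s|) ^ γ) volume a b := by
  rcases le_or_gt 0 γ with hγ0 | hγ0
  · exact ((continuous_const.add continuous_abs).rpow_const fun _ => Or.inr hγ0).intervalIntegrable
      a b
  refine (intervalIntegrable_abs_rpow hγ a b).mono_fun
    ((measurable_const.add measurable_abs).pow_const γ).aestronglyMeasurable ?_
  filter_upwards [Measure.ae_ne _ 0] with s hs
  rw [norm_of_nonneg (by positivity), norm_of_nonneg (by positivity)]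
  exact add_abs_rpow_le_abs_rpow hγ0.le hx' hs

lemma inv_mul_integral_le_of_forall_le {f : ℝ → ℝ} {a b c : ℝ} (hab : a < b)
    (hf : IntervalIntegrable f volume a b) (h : ∀ s ∈ Icc a b, f s ≤ c) :
    (b - a)⁻¹ * ∫ s in a..b, f s ≤ c := by
  rw [inv_mul_le_iff₀ (sub_pos.2 hab)]
  simpa using integral_mono_on hab.le hf intervalIntegrable_const h

lemma infDist_zero_Icc_le_abs {a b s : ℝ} (hs : s ∈ Icc a b) : infDist 0 (Icc a b) ≤ |s| := by
  simpa using infDist_le_dist_of_mem (x := 0) hs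

lemma abs_le_infDist_zero_Icc_add {a b s : ℝ} (hs : s ∈ Icc a b) :
    |s| ≤ infDist 0 (Icc a b) + (b - a) := by
  obtain ⟨t, ht, hdist⟩ := isCompact_Icc.exists_infDist_eq_dist ⟨s, hs⟩ (0 : ℝ)
  rw [hdist, dist_zero_left, Real.norm_eq_abs]
  have hst : |s - t| ≤ b - a :=
    abs_sub_le_iff.2 ⟨by linarith [hs.2, ht.1], by linarith [hs.1, ht.2]⟩
  linarith [abs_sub_abs_le_abs_sub s t]

noncomputable def weightScale (x' a b : ℝ) : ℝ := max (x' + infDist 0 (Icc a b)) (b - a)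

lemma weightScale_pos {x' a b : ℝ} (hab : a < b) : 0 < weightScale x' a b :=
  lt_max_of_lt_right (sub_pos.2 hab)

lemma average_add_abs_rpow_le_of_nonneg {γ x' a b : ℝ} (hγ : 0 ≤ γ) (hx' : 0 ≤ x')
    (hab : a < b) :
    (b - a)⁻¹ * ∫ s in a..b, (x' + |s|) ^ γ ≤ 2 ^ γ * weightScale x' a b ^ γ := by
  rw [← mul_rpow zero_le_two (weightScale_pos hab).le]
  refine inv_mul_integral_le_of_forall_le hab
    (intervalIntegrable_add_abs_rpow (by linarith) hx' a b) fun s hs => ?_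
  have h₁ := le_max_left (x' + infDist 0 (Icc a b)) (b - a)
  have h₂ := le_max_right (x' + infDist 0 (Icc a b)) (b - a)
  have h₃ := abs_le_infDist_zero_Icc_add hs
  exact rpow_le_rpow (by positivity) (by rw [weightScale]; linarith) hγ

lemma average_add_abs_rpow_le_of_nonpos {γ x' a b : ℝ} (hγ : -1 < γ) (hγ0 : γ ≤ 0)
    (hx' : 0 ≤ x') (hab : a < b) :
    (b - a)⁻¹ * ∫ s in a..b, (x' + |s|) ^ γ ≤
      max 1 (2 ^ (γ + 2) / (γ + 1)) * weightScale x' a b ^ γ := by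
  have hL : 0 < b - a := sub_pos.2 hab
  set D := infDist 0 (Icc a b)
  rcases le_total (b - a) (x' + D) with hfar | hnear
  · have hscale : weightScale x' a b = x' + D := max_eq_left hfar
    refine le_trans ?_ (le_mul_of_one_le_left (rpow_nonneg (weightScale_pos hab).le _)
      (le_max_left _ _))
    rw [hscale]
    refine inv_mul_integral_le_of_forall_le hab (intervalIntegrable_add_abs_rpow hγ hx' a b)
      fun s hs => rpow_le_rpow_of_nonpos (by linarith) ?_ hγ0
    linarith [infDist_zero_Icc_le_abs hs]
  · have hscale : weightScale x' a b = b - a := max_eq_right hnear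
    have ha := abs_le_infDist_zero_Icc_add (left_mem_Icc.2 hab.le)
    have hb := abs_le_infDist_zero_Icc_add (right_mem_Icc.2 hab.le)
    have hint : ∫ s in a..b, (x' + |s|) ^ γ ≤ 2 * ((2 * (b - a)) ^ (γ + 1) / (γ + 1)) := by
      refine (integral_mono_ae_restrict hab.le (intervalIntegrable_add_abs_rpow hγ hx' a b)
        (intervalIntegrable_abs_rpow hγ a b) ?_).trans
        (integral_abs_rpow_le hγ hab.le ?_ ?_)
      · filter_upwards [Measure.ae_ne _ 0] with s hs
        exact add_abs_rpow_le_abs_rpow hγ0 hx' hs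
      · linarith [neg_abs_le a]
      · linarith [le_abs_self b]
    have hcalc : (b - a)⁻¹ * (2 * ((2 * (b - a)) ^ (γ + 1) / (γ + 1))) =
        2 ^ (γ + 2) / (γ + 1) * (b - a) ^ γ := by
      rw [show γ + 2 = (γ + 1) + 1 by ring, rpow_add_one two_ne_zero, mul_rpow zero_le_two hL.le,
        rpow_add_one hL.ne' γ]
      field_simp
    calc (b - a)⁻¹ * ∫ s in a..b, (x' + |s|) ^ γ
        ≤ (b - a)⁻¹ * (2 * ((2 * (b - a)) ^ (γ + 1) / (γ + 1))) := by gcongr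
      _ = 2 ^ (γ + 2) / (γ + 1) * (b - a) ^ γ := hcalc
      _ ≤ max 1 (2 ^ (γ + 2) / (γ + 1)) * weightScale x' a b ^ γ := by
        rw [hscale]; gcongr; exact le_max_right _ _

lemma exists_average_add_abs_rpow_le {γ : ℝ} (hγ : -1 < γ) :
    ∃ K > 0, ∀ a b x' : ℝ, a < b → 0 ≤ x' →
      (b - a)⁻¹ * ∫ s in a..b, (x' + |s|) ^ γ ≤ K * weightScale x' a b ^ γ := by
  rcases le_total 0 γ with hγ0 | hγ0
  · exact ⟨2 ^ γ, by positivity, fun a b x' hab hx' =>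
      average_add_abs_rpow_le_of_nonneg hγ0 hx' hab⟩
  · exact ⟨max 1 (2 ^ (γ + 2) / (γ + 1)), lt_max_of_lt_left one_pos, fun a b x' hab hx' =>
      average_add_abs_rpow_le_of_nonpos hγ hγ0 hx' hab⟩

theorem stmt_14 (p α : ℝ) (hp : 1 < p) (hα1 : -1 / p < α) (hα2 : α < 1 - 1 / p) :
    ∃ C : ℝ, 0 < C ∧ ∀ a b : ℝ, a < b → ∀ x' : ℝ, 0 ≤ x' →
      ((b - a)⁻¹ * ∫ s in a..b, (x' + |s|) ^ (p * α)) *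
        ((b - a)⁻¹ * ∫ s in a..b, (x' + |s|) ^ (-(p * α) / (p - 1))) ^ (p - 1) ≤ C := by
  have hp0 : 0 < p := by linarith
  have hp1 : 0 < p - 1 := by linarith
  have hβ : -1 < p * α := by
    have := mul_lt_mul_of_pos_left hα1 hp0
    rwa [mul_div_cancel₀ _ hp0.ne'] at this
  have hβ' : -1 < -(p * α) / (p - 1) := by
    have := mul_lt_mul_of_pos_left hα2 hp0
    rw [lt_div_iff₀ hp1]
    rw [mul_sub, mul_one, mul_div_cancel₀ _ hp0.ne'] at this
    linarith
  obtain ⟨K₁, hK₁, h₁⟩ := exists_average_add_abs_rpow_le hβ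
  obtain ⟨K₂, hK₂, h₂⟩ := exists_average_add_abs_rpow_le hβ'
  refine ⟨K₁ * K₂ ^ (p - 1), by positivity, fun a b hab x' hx' => ?_⟩
  have hR := weightScale_pos (x' := x') hab
  have hA₂ : 0 ≤ (b - a)⁻¹ * ∫ s in a..b, (x' + |s|) ^ (-(p * α) / (p - 1)) :=
    mul_nonneg (inv_nonneg.2 (sub_pos.2 hab).le)
      (integral_nonneg hab.le fun s _ => rpow_nonneg (by positivity) _)
  calc _ ≤ (K₁ * weightScale x' a b ^ (p * α)) *
        (K₂ * weightScale x' a b ^ (-(p * α) / (p - 1))) ^ (p - 1) := by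
        gcongr ?_ * ?_
        · exact h₁ a b x' hab hx'
        · exact rpow_le_rpow hA₂ (h₂ a b x' hab hx') hp1.le
    _ = K₁ * K₂ ^ (p - 1) := by
        rw [mul_rpow hK₂.le (rpow_nonneg hR.le _), ← rpow_mul hR.le,
          div_mul_cancel₀ _ hp1.ne', rpow_neg hR.le]
        field_simp
end
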